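/- arXiv:1909.12075 — 2 statements merged into one kernel-verified Lean document; each statement's English description precedes it below -/
import Mathlib

section
/- Let A be a finite set of reals and for each integer ℓ let r(ℓ) = |{(t₁,t₂) ∈ A × A : 0 ≤ t₁ - t₂ - ℓ < 1}|. Then Σ_ℓ r(ℓ) = |A|², and Σ_ℓ r(ℓ)² is bounded above and below (up to absolute constants) by the additive energy E(A) = |{(t₁,t₂,t₃,t₄) ∈ A⁴ : |t₁ + t₂ - t₃ - t₄| ≤ 1}|; more precisely Σ_ℓ r(ℓ)² ≪ E(A) ≪ Σ_ℓ r(ℓ)². -/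
/-!
Sort the pairs `(t₁, t₂) ∈ A²` by `⌊t₁ - t₂⌋`: then `r(ℓ)` is the size of the fibre over `ℓ`, so
`Σ r(ℓ) = |A|²` and `Σ r(ℓ)²` counts the pairs of pairs lying in a common fibre. The substitution
`(t₁, t₂, t₃, t₄) ↦ ((t₁, t₃), (t₄, t₂))` turns `E(A)` into the number of pairs of pairs whose
differences are within `1` of each other. Equal floors force differences within `1`, and
differences within `1` force floors within `1`; pairs of pairs whose floors differ by a fixed `d`
number `Σ r(ℓ) r(ℓ + d) ≤ Σ r(ℓ)²` by AM-GM. Summing over `d ∈ {-1, 0, 1}` gives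
`Σ r(ℓ)² ≤ E(A) ≤ 3 Σ r(ℓ)²`.
-/

open Finset Function

theorem two_mul_finsum_mul_le {ι R : Type*} [CommRing R] [LinearOrder R] [IsStrictOrderedRing R]
    {f g : ι → R} (hf : HasFiniteSupport f) (hg : HasFiniteSupport g) :
    2 * ∑ᶠ i, f i * g i ≤ ∑ᶠ i, f i * f i + ∑ᶠ i, g i * g i := by
  rw [mul_finsum' _ _ (hf.fun_mul_left g),
    ← finsum_add_distrib (hf.fun_mul_left f) (hg.fun_mul_left g)]
  exact finsum_le_finsum' (by fun_prop) (by fun_prop)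
    fun i => by simpa only [mul_assoc, sq] using two_mul_le_add_sq (f i) (g i)

section Fibers

variable {α γ β : Type*} [DecidableEq β]

theorem support_card_filter_eq_subset_image {R : Type*} [AddMonoidWithOne R]
    (s : Finset α) (f : α → β) :
    support (fun b => (#{x ∈ s | f x = b} : R)) ⊆ ↑(s.image f) := by
  refine support_subset_iff'.2 fun b hb => ?_
  suffices {x ∈ s | f x = b} = ∅ by simp [this]
  exact filter_eq_empty_iff.2 fun x hx hxb => hb (mem_image.2 ⟨x, hx, hxb⟩)

theorem hasFiniteSupport_card_filter_eq {R : Type*} [AddMonoidWithOne R] (s : Finset α)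
    (f : α → β) : HasFiniteSupport fun b => (#{x ∈ s | f x = b} : R) :=
  (s.image f).finite_toSet.subset (support_card_filter_eq_subset_image s f)

theorem finsum_card_filter_eq {R : Type*} [AddCommMonoidWithOne R] (s : Finset α) (f : α → β) :
    ∑ᶠ b, (#{x ∈ s | f x = b} : R) = #s := by
  rw [finsum_eq_sum_of_support_subset _ (support_card_filter_eq_subset_image s f),
    ← Nat.cast_sum, ← card_eq_sum_card_image]

theorem card_filter_eq_eq_finsum {R : Type*} [CommSemiring R] (s : Finset α) (t : Finset γ)
    (f : α → β) (g : γ → β) :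
    (#{p ∈ s ×ˢ t | f p.1 = g p.2} : R) =
      ∑ᶠ b, (#{x ∈ s | f x = b} : R) * #{y ∈ t | g y = b} := by
  have hfiber : ∀ b, {q ∈ {p ∈ s ×ˢ t | f p.1 = g p.2} | f q.1 = b} =
      {x ∈ s | f x = b} ×ˢ {y ∈ t | g y = b} := by
    intro b
    rw [filter_filter, ← filter_product]
    exact filter_congr fun p _ =>
      ⟨fun ⟨h, hb⟩ => ⟨hb, h ▸ hb⟩, fun ⟨hb, h⟩ => ⟨hb.trans h.symm, hb⟩⟩
  rw [finsum_eq_sum_of_support_subset _ ((support_mul_subset_left _ _).trans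
      (support_card_filter_eq_subset_image s f)),
    card_eq_sum_card_fiberwise (f := fun p => f p.1) (t := s.image f)
      fun p hp => mem_image_of_mem f (mem_product.1 (mem_filter.1 hp).1).1]
  simp only [hfiber, card_product, Nat.cast_sum, Nat.cast_mul]

theorem finsum_sq_card_filter_eq {R : Type*} [CommSemiring R] (s : Finset α) (f : α → β) :
    ∑ᶠ b, (#{x ∈ s | f x = b} : R) ^ 2 = #{p ∈ s ×ˢ s | f p.1 = f p.2} := by
  simp only [sq, card_filter_eq_eq_finsum]

theorem two_mul_card_filter_eq_le (s : Finset α) (t : Finset γ) (f : α → β) (g : γ → β) :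
    2 * #{p ∈ s ×ˢ t | f p.1 = g p.2} ≤
      #{p ∈ s ×ˢ s | f p.1 = f p.2} + #{p ∈ t ×ˢ t | g p.1 = g p.2} := by
  suffices (2 * #{p ∈ s ×ˢ t | f p.1 = g p.2} : ℝ) ≤
      #{p ∈ s ×ˢ s | f p.1 = f p.2} + #{p ∈ t ×ˢ t | g p.1 = g p.2} by exact_mod_cast this
  simp only [card_filter_eq_eq_finsum]
  exact two_mul_finsum_mul_le (hasFiniteSupport_card_filter_eq s f)
    (hasFiniteSupport_card_filter_eq t g)

end Fibers

theorem card_filter_abs_sub_le_one_le_three_mul {α : Type*} (s : Finset α) (f : α → ℤ) :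
    #{p ∈ s ×ˢ s | |f p.1 - f p.2| ≤ 1} ≤ 3 * #{p ∈ s ×ˢ s | f p.1 = f p.2} := by
  -- `f` and `f · + d` have the same collisions, so AM-GM bounds the collisions shifted by `d`.
  have hshift (d : ℤ) : #{p ∈ s ×ˢ s | f p.1 = f p.2 + d} ≤ #{p ∈ s ×ˢ s | f p.1 = f p.2} := by
    have h := two_mul_card_filter_eq_le s s f (f · + d)
    simp only [add_left_inj] at h
    omega
  classical
  calc #{p ∈ s ×ˢ s | |f p.1 - f p.2| ≤ 1}
      ≤ #{p ∈ s ×ˢ s | f p.1 = f p.2 + -1 ∨ f p.1 = f p.2 + 0 ∨ f p.1 = f p.2 + 1} :=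
        card_le_card <| monotone_filter_right _ fun _ _ h => by rw [abs_le] at h; omega
    _ ≤ 3 * #{p ∈ s ×ˢ s | f p.1 = f p.2} := by
        rw [filter_or, filter_or]
        grw [card_union_le, card_union_le, hshift, hshift, hshift]
        omega

section Floor

variable {K : Type*} [Ring K] [LinearOrder K] [FloorRing K] [IsOrderedRing K]

theorem abs_floor_sub_floor_le_one {a b : K} (h : |a - b| ≤ 1) : |⌊a⌋ - ⌊b⌋| ≤ 1 := by
  obtain ⟨hlow, hhigh⟩ := abs_le.1 h
  rw [abs_le]
  have hab : ⌊a⌋ ≤ ⌊b⌋ + 1 := by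
    rw [← Int.floor_add_one]; exact Int.floor_le_floor (sub_le_iff_le_add'.1 hhigh)
  have hba : ⌊b⌋ ≤ ⌊a⌋ + 1 := by
    rw [← Int.floor_add_one]; exact Int.floor_le_floor (neg_le_sub_iff_le_add.1 hlow)
  omega

variable {α : Type*} (s : Finset α) (g : α → K)

theorem card_filter_floor_eq_le_card_filter_abs_sub_le_one :
    #{p ∈ s ×ˢ s | ⌊g p.1⌋ = ⌊g p.2⌋} ≤ #{p ∈ s ×ˢ s | |g p.1 - g p.2| ≤ 1} :=
  card_le_card <| monotone_filter_right _ fun _ _ h => (Int.abs_sub_lt_one_of_floor_eq_floor h).le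

theorem card_filter_abs_sub_le_one_le_three_mul_card_filter_floor_eq :
    #{p ∈ s ×ˢ s | |g p.1 - g p.2| ≤ 1} ≤ 3 * #{p ∈ s ×ˢ s | ⌊g p.1⌋ = ⌊g p.2⌋} :=
  (card_le_card <| monotone_filter_right _ fun _ _ => abs_floor_sub_floor_le_one).trans
    (card_filter_abs_sub_le_one_le_three_mul s fun x => ⌊g x⌋)

end Floor

theorem card_filter_add_sub_sub_eq {G : Type*} [AddCommGroup G] (A : Finset G) (P : G → Prop)
    [DecidablePred P] :
    #{q ∈ (A ×ˢ A) ×ˢ (A ×ˢ A) | P (q.1.1 + q.1.2 - q.2.1 - q.2.2)} =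
      #{q ∈ (A ×ˢ A) ×ˢ (A ×ˢ A) | P (q.1.1 - q.1.2 - (q.2.1 - q.2.2))} := by
  refine card_nbij' (fun q => ((q.1.1, q.2.1), (q.2.2, q.1.2)))
    (fun q => ((q.1.1, q.2.2), (q.1.2, q.2.1))) ?_ ?_ (fun _ _ => rfl) (fun _ _ => rfl)
  · rintro ⟨⟨a, b⟩, c, d⟩
    simp only [coe_filter, Set.mem_ofPred_eq, mem_product]
    rintro ⟨⟨⟨ha, hb⟩, hc, hd⟩, h⟩
    exact ⟨⟨⟨ha, hc⟩, hd, hb⟩, by rwa [show a - c - (d - b) = a + b - c - d by abel]⟩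
  · rintro ⟨⟨a, b⟩, c, d⟩
    simp only [coe_filter, Set.mem_ofPred_eq, mem_product]
    rintro ⟨⟨⟨ha, hb⟩, hc, hd⟩, h⟩
    exact ⟨⟨⟨ha, hd⟩, hb, hc⟩, by rwa [show a + d - b - c = a - b - (c - d) by abel]⟩

/-- with `r(ℓ) = |{(t₁,t₂) ∈ A² : 0 ≤ t₁-t₂-ℓ < 1}|`, one has
`Σ_ℓ r(ℓ) = |A|²`, and `Σ_ℓ r(ℓ)²` is comparable, up to absolute constants,
to the additive energy `E(A) = |{(t₁,t₂,t₃,t₄) ∈ A⁴ : |t₁+t₂-t₃-t₄| ≤ 1}|`. -/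
theorem stmt_13 :
    ∃ c₁ c₂ : ℝ, 0 < c₁ ∧ 0 < c₂ ∧
      ∀ A : Finset ℝ,
        (∑ᶠ ℓ : ℤ,
            (((A ×ˢ A).filter (fun p => 0 ≤ p.1 - p.2 - (ℓ : ℝ) ∧ p.1 - p.2 - (ℓ : ℝ) < 1)).card : ℝ))
          = (A.card : ℝ) ^ 2 ∧
        c₁ * ∑ᶠ ℓ : ℤ,
            (((A ×ˢ A).filter (fun p => 0 ≤ p.1 - p.2 - (ℓ : ℝ) ∧ p.1 - p.2 - (ℓ : ℝ) < 1)).card : ℝ) ^ 2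
          ≤ ((((A ×ˢ A) ×ˢ (A ×ˢ A)).filter
              (fun q => |q.1.1 + q.1.2 - q.2.1 - q.2.2| ≤ 1)).card : ℝ) ∧
        ((((A ×ˢ A) ×ˢ (A ×ˢ A)).filter
              (fun q => |q.1.1 + q.1.2 - q.2.1 - q.2.2| ≤ 1)).card : ℝ)
          ≤ c₂ * ∑ᶠ ℓ : ℤ,
            (((A ×ˢ A).filter (fun p => 0 ≤ p.1 - p.2 - (ℓ : ℝ) ∧ p.1 - p.2 - (ℓ : ℝ) < 1)).card : ℝ) ^ 2 := by
  refine ⟨1, 3, one_pos, three_pos, fun A => ?_⟩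
  have hfloor (ℓ : ℤ) : {p ∈ A ×ˢ A | 0 ≤ p.1 - p.2 - (ℓ : ℝ) ∧ p.1 - p.2 - (ℓ : ℝ) < 1} =
      {p ∈ A ×ˢ A | ⌊p.1 - p.2⌋ = ℓ} :=
    filter_congr fun p _ => by rw [Int.floor_eq_iff, sub_nonneg, sub_lt_iff_lt_add']
  simp only [hfloor, finsum_card_filter_eq, finsum_sq_card_filter_eq, card_product,
    card_filter_add_sub_sub_eq A fun x => |x| ≤ 1]
  refine ⟨by push_cast; ring, ?_, ?_⟩
  · rw [one_mul]
    exact_mod_cast card_filter_floor_eq_le_card_filter_abs_sub_le_one (A ×ˢ A) fun p => p.1 - p.2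
  · exact_mod_cast
      card_filter_abs_sub_le_one_le_three_mul_card_filter_floor_eq (A ×ˢ A) fun p => p.1 - p.2
end

section
/- Let A be a finite set of reals in [0,T] and k ≥ 1. Define γ(ℓ) = |{(t₁,…,t_k) ∈ A^k : ℓ < t₁ + ⋯ + t_k ≤ ℓ + 1}| for integers ℓ. Then Σ_ℓ γ(ℓ) = |A|^k (so Σ_{ℓ₁,ℓ₂} γ(ℓ₁)γ(ℓ₂) = |A|^{2k}), and Σ_ℓ γ(ℓ)² is bounded above and below, up to constants depending only on k, by T_k(A) = |{(t₁,…,t_{2k}) ∈ A^{2k} : |t₁ + ⋯ + t_k - t_{k+1} - ⋯ - t_{2k}| ≤ 1}|. -/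
/-- with `γ(ℓ)` counting `k`-tuples from `A` whose sum lies in
`(ℓ, ℓ+1]`, one has `Σ_ℓ γ(ℓ) = |A|^k`, and `Σ_ℓ γ(ℓ)²` is comparable, up to
constants depending only on `k`, to the `2k`-fold energy
`T_k(A) = |{tuples : |t₁+⋯+t_k - t_{k+1}-⋯-t_{2k}| ≤ 1}|`. -/
theorem stmt_17 (k : ℕ) (hk : 1 ≤ k) :
    ∃ c₁ c₂ : ℝ, 0 < c₁ ∧ 0 < c₂ ∧
      ∀ (T : ℝ) (A : Finset ℝ),
        (∀ t ∈ A, 0 ≤ t ∧ t ≤ T) →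
        (∑ᶠ ℓ : ℤ,
            (((Fintype.piFinset fun _ : Fin k => A).filter
                (fun f => (ℓ : ℝ) < ∑ i, f i ∧ ∑ i, f i ≤ (ℓ : ℝ) + 1)).card : ℝ))
          = (A.card : ℝ) ^ k ∧
        c₁ * ∑ᶠ ℓ : ℤ,
            (((Fintype.piFinset fun _ : Fin k => A).filter
                (fun f => (ℓ : ℝ) < ∑ i, f i ∧ ∑ i, f i ≤ (ℓ : ℝ) + 1)).card : ℝ) ^ 2
          ≤ ((((Fintype.piFinset fun _ : Fin k => A) ×ˢ
                (Fintype.piFinset fun _ : Fin k => A)).filter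
                (fun p => |(∑ i, p.1 i) - ∑ i, p.2 i| ≤ 1)).card : ℝ) ∧
        ((((Fintype.piFinset fun _ : Fin k => A) ×ˢ
                (Fintype.piFinset fun _ : Fin k => A)).filter
                (fun p => |(∑ i, p.1 i) - ∑ i, p.2 i| ≤ 1)).card : ℝ)
          ≤ c₂ * ∑ᶠ ℓ : ℤ,
            (((Fintype.piFinset fun _ : Fin k => A).filter
                (fun f => (ℓ : ℝ) < ∑ i, f i ∧ ∑ i, f i ≤ (ℓ : ℝ) + 1)).card : ℝ) ^ 2 := by
  refine ⟨1, 3, one_pos, by norm_num, fun T A _ => ?_⟩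
  set S : Finset (Fin k → ℝ) := Fintype.piFinset fun _ : Fin k => A with hS
  set L : (Fin k → ℝ) → ℤ := fun f => ⌈∑ i, f i⌉ - 1 with hLdef
  have hpred : ∀ (ℓ : ℤ) (f : Fin k → ℝ),
      ((ℓ : ℝ) < ∑ i, f i ∧ ∑ i, f i ≤ (ℓ : ℝ) + 1) ↔ L f = ℓ := by
    intro ℓ f
    simp only [hLdef, sub_eq_iff_eq_add, Int.ceil_eq_iff]
    push_cast
    constructor
    · rintro ⟨h1, h2⟩; exact ⟨by linarith, by linarith⟩
    · rintro ⟨h1, h2⟩; exact ⟨by linarith, by linarith⟩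
  have hfil : ∀ ℓ : ℤ,
      S.filter (fun f => (ℓ : ℝ) < ∑ i, f i ∧ ∑ i, f i ≤ (ℓ : ℝ) + 1)
        = S.filter (fun f => L f = ℓ) :=
    fun ℓ => Finset.filter_congr (fun f _ => hpred ℓ f)
  have hmem : ∀ f : Fin k → ℝ,
      ((L f : ℝ) < ∑ i, f i ∧ ∑ i, f i ≤ (L f : ℝ) + 1) :=
    fun f => (hpred (L f) f).mpr rfl
  set F : ℤ → Finset (Fin k → ℝ) := fun ℓ => S.filter (fun f => L f = ℓ) with hF
  set γ : ℤ → ℝ := fun ℓ => ((F ℓ).card : ℝ) with hγ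
  simp only [hfil]
  set I : Finset ℤ := S.image L with hI
  have hmemI : ∀ f ∈ S, L f ∈ I := fun f hf => Finset.mem_image_of_mem L hf
  have hsupp1 : Function.support γ ⊆ (I : Set ℤ) := by
    intro ℓ hℓ
    simp only [hγ, Function.mem_support, ne_eq, Nat.cast_eq_zero,
      Finset.card_eq_zero] at hℓ
    obtain ⟨f, hf⟩ := Finset.nonempty_iff_ne_empty.mpr hℓ
    rw [hF, Finset.mem_filter] at hf
    exact Finset.mem_coe.mpr (Finset.mem_image.mpr ⟨f, hf.1, hf.2⟩)
  have hsupp2 : Function.support (fun ℓ => γ ℓ ^ 2) ⊆ (I : Set ℤ) := by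
    intro ℓ hℓ
    apply hsupp1
    simp only [Function.mem_support, ne_eq] at hℓ ⊢
    intro h; exact hℓ (by rw [h]; ring)
  have hsum1 : (∑ᶠ ℓ : ℤ, γ ℓ) = ∑ ℓ ∈ I, γ ℓ := finsum_eq_sum_of_support_subset γ hsupp1
  have hsum2 : (∑ᶠ ℓ : ℤ, γ ℓ ^ 2) = ∑ ℓ ∈ I, γ ℓ ^ 2 :=
    finsum_eq_sum_of_support_subset _ hsupp2
  -- Part 1
  have part1 : (∑ᶠ ℓ : ℤ, γ ℓ) = (A.card : ℝ) ^ k := by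
    rw [hsum1]
    have h := Finset.card_eq_sum_card_fiberwise hmemI
    have hScard : S.card = A.card ^ k := by
      rw [hS, Fintype.card_piFinset]; simp
    have : ∑ ℓ ∈ I, γ ℓ = ((∑ ℓ ∈ I, (F ℓ).card : ℕ) : ℝ) := by push_cast [hγ]; rfl
    rw [this, ← h, hScard]; push_cast; ring
  -- The energy set
  set P : Finset ((Fin k → ℝ) × (Fin k → ℝ)) :=
    (S ×ˢ S).filter (fun p => |(∑ i, p.1 i) - ∑ i, p.2 i| ≤ 1) with hP
  -- Lower bound
  set Q : Finset ((Fin k → ℝ) × (Fin k → ℝ)) :=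
    (S ×ˢ S).filter (fun p => L p.1 = L p.2) with hQ
  have hQP : Q ⊆ P := by
    intro p hp
    rw [hQ, Finset.mem_filter] at hp
    rw [hP, Finset.mem_filter]
    refine ⟨hp.1, ?_⟩
    have h1 := hmem p.1
    have h2 := hmem p.2
    have hLL : ((L p.1 : ℝ)) = ((L p.2 : ℝ)) := by exact_mod_cast hp.2
    rw [abs_le]; constructor <;> linarith [h1.1, h1.2, h2.1, h2.2]
  have hQcard : (Q.card : ℝ) = ∑ ℓ ∈ I, γ ℓ ^ 2 := by
    have hm : ∀ p ∈ Q, L p.1 ∈ I := by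
      intro p hp
      rw [hQ, Finset.mem_filter, Finset.mem_product] at hp
      exact hmemI _ hp.1.1
    have h := Finset.card_eq_sum_card_fiberwise hm
    have hfib : ∀ ℓ ∈ I, Q.filter (fun p => L p.1 = ℓ) = F ℓ ×ˢ F ℓ := by
      intro ℓ _
      ext p
      rw [Finset.mem_filter, hQ, Finset.mem_filter, Finset.mem_product,
        Finset.mem_product, hF, Finset.mem_filter, Finset.mem_filter]
      constructor
      · rintro ⟨⟨⟨ha, hb⟩, hab⟩, hc⟩; exact ⟨⟨ha, hc⟩, ⟨hb, by omega⟩⟩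
      · rintro ⟨⟨ha, hc⟩, ⟨hb, hd⟩⟩; exact ⟨⟨⟨ha, hb⟩, by omega⟩, hc⟩
    rw [h]
    push_cast
    refine Finset.sum_congr rfl fun ℓ hℓ => ?_
    rw [hfib ℓ hℓ, Finset.card_product]
    push_cast
    ring
  have lower : 1 * (∑ᶠ ℓ : ℤ, γ ℓ ^ 2) ≤ (P.card : ℝ) := by
    rw [one_mul, hsum2, ← hQcard]
    exact_mod_cast Finset.card_le_card hQP
  -- Upper bound
  have hshift : ∀ d : ℤ, ∑ ℓ ∈ I, γ (ℓ - d) ^ 2 ≤ ∑ ℓ ∈ I, γ ℓ ^ 2 := by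
    intro d
    have hinj : ∀ a ∈ I, ∀ b ∈ I, a - d = b - d → a = b := fun a _ b _ h => by omega
    rw [show (∑ ℓ ∈ I, γ (ℓ - d) ^ 2) = ∑ ℓ ∈ I.image (fun ℓ => ℓ - d), γ ℓ ^ 2 from
      (Finset.sum_image (f := fun ℓ => γ ℓ ^ 2) hinj).symm]
    set J := I.image (fun ℓ => ℓ - d)
    have e1 : ∑ ℓ ∈ J ∩ I, γ ℓ ^ 2 = ∑ ℓ ∈ J, γ ℓ ^ 2 := by
      apply Finset.sum_subset (Finset.inter_subset_left)
      intro x hx hnx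
      have : x ∉ I := fun hxI => hnx (Finset.mem_inter.mpr ⟨hx, hxI⟩)
      have := fun h => this (hsupp2 h)
      simpa [Function.mem_support] using this
    rw [← e1]
    exact Finset.sum_le_sum_of_subset_of_nonneg Finset.inter_subset_right
      (fun ℓ _ _ => sq_nonneg _)
  have hRd : ∀ d : ℤ,
      ((((S ×ˢ S).filter (fun p => L p.1 - L p.2 = d)).card : ℝ))
        ≤ ∑ ℓ ∈ I, γ ℓ ^ 2 := by
    intro d
    set R := (S ×ˢ S).filter (fun p => L p.1 - L p.2 = d) with hR
    have hm : ∀ p ∈ R, L p.1 ∈ I := by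
      intro p hp
      rw [hR, Finset.mem_filter, Finset.mem_product] at hp
      exact hmemI _ hp.1.1
    have h := Finset.card_eq_sum_card_fiberwise hm
    have hfib : ∀ ℓ ∈ I, R.filter (fun p => L p.1 = ℓ) = F ℓ ×ˢ F (ℓ - d) := by
      intro ℓ _
      ext p
      rw [Finset.mem_filter, hR, Finset.mem_filter, Finset.mem_product,
        Finset.mem_product, hF, Finset.mem_filter, Finset.mem_filter]
      constructor
      · rintro ⟨⟨⟨ha, hb⟩, hab⟩, hc⟩; exact ⟨⟨ha, hc⟩, ⟨hb, by omega⟩⟩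
      · rintro ⟨⟨ha, hc⟩, ⟨hb, hd⟩⟩; exact ⟨⟨⟨ha, hb⟩, by omega⟩, hc⟩
    have hcard : (R.card : ℝ) = ∑ ℓ ∈ I, γ ℓ * γ (ℓ - d) := by
      rw [h]
      push_cast
      refine Finset.sum_congr rfl fun ℓ hℓ => ?_
      rw [hfib ℓ hℓ, Finset.card_product]
      push_cast
      ring
    rw [hcard]
    have step : ∑ ℓ ∈ I, γ ℓ * γ (ℓ - d)
        ≤ (∑ ℓ ∈ I, γ ℓ ^ 2 + ∑ ℓ ∈ I, γ (ℓ - d) ^ 2) / 2 := by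
      rw [← Finset.sum_add_distrib]
      rw [Finset.sum_div]
      apply Finset.sum_le_sum
      intro ℓ _
      nlinarith [sq_nonneg (γ ℓ - γ (ℓ - d))]
    have := hshift d
    linarith
  have hPsub : ∀ p ∈ P, L p.1 - L p.2 ∈ ({-1, 0, 1} : Finset ℤ) := by
    intro p hp
    rw [hP, Finset.mem_filter, abs_le] at hp
    have h1 := hmem p.1
    have h2 := hmem p.2
    have hlt1 : ((L p.1 : ℝ)) < (L p.2 : ℝ) + 2 := by linarith [h1.1, h1.2, h2.1, h2.2, hp.2.1, hp.2.2]
    have hlt2 : ((L p.2 : ℝ)) < (L p.1 : ℝ) + 2 := by linarith [h1.1, h1.2, h2.1, h2.2, hp.2.1, hp.2.2]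
    have i1 : L p.1 < L p.2 + 2 := by exact_mod_cast hlt1
    have i2 : L p.2 < L p.1 + 2 := by exact_mod_cast hlt2
    simp only [Finset.mem_insert, Finset.mem_singleton]
    omega
  have upper : (P.card : ℝ) ≤ 3 * (∑ᶠ ℓ : ℤ, γ ℓ ^ 2) := by
    rw [hsum2]
    have h := Finset.card_eq_sum_card_fiberwise hPsub
    have hsub : ∀ d ∈ ({-1, 0, 1} : Finset ℤ),
        ((P.filter (fun p => L p.1 - L p.2 = d)).card : ℝ)
          ≤ ∑ ℓ ∈ I, γ ℓ ^ 2 := by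
      intro d _
      refine le_trans ?_ (hRd d)
      have : P.filter (fun p => L p.1 - L p.2 = d)
          ⊆ (S ×ˢ S).filter (fun p => L p.1 - L p.2 = d) := by
        intro p hp
        rw [Finset.mem_filter] at hp ⊢
        rw [hP, Finset.mem_filter] at hp
        exact ⟨hp.1.1, hp.2⟩
      exact_mod_cast Finset.card_le_card this
    calc (P.card : ℝ)
        = ∑ d ∈ ({-1, 0, 1} : Finset ℤ),
            ((P.filter (fun p => L p.1 - L p.2 = d)).card : ℝ) := by
          rw [h]; push_cast; rfl
      _ ≤ ∑ d ∈ ({-1, 0, 1} : Finset ℤ), ∑ ℓ ∈ I, γ ℓ ^ 2 :=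
          Finset.sum_le_sum hsub
      _ = 3 * ∑ ℓ ∈ I, γ ℓ ^ 2 := by
          rw [Finset.sum_const]
          norm_num
  exact ⟨part1, lower, upper⟩
end
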